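/- arXiv:0906.5406 — 2 statements merged into one kernel-verified Lean document; each statement's English description precedes it below -/
import Mathlib

section
/- Let A be a linear relation in a Hilbert space H. Then the following are equivalent: (i) dom A* = H; (ii) ran A** ⊆ dom A*; (iii) A is the graph of a bounded operator (i.e., mul A = {0} and there exists C with ‖f'‖ ≤ C‖f‖ for all (f,f') ∈ A). -/
open scoped ComplexInnerProductSpace

variable {H : Type*} [NormedAddCommGroup H] [InnerProductSpace ℂ H] [CompleteSpace H]

/-- The adjoint of a linear relation (given as a set of pairs). -/
def adjRel (S : Set (H × H)) : Set (H × H) :=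
  {p | ∀ q ∈ S, ⟪p.2, q.1⟫ = ⟪p.1, q.2⟫}

/-- The domain of a linear relation. -/
def domRel (S : Set (H × H)) : Set H := {f | ∃ g, (f, g) ∈ S}

/-- The range of a linear relation. -/
def ranRel (S : Set (H × H)) : Set H := {g | ∃ f, (f, g) ∈ S}

/-- The multivalued part of a linear relation. -/
def mulRel (S : Set (H × H)) : Set H := {g | (0, g) ∈ S}

/-- The kernel of a linear relation. -/
def kerRel (S : Set (H × H)) : Set H := {f | (f, 0) ∈ S}

/-- The operatorwise sum of two linear relations. -/
def opSum (S T : Set (H × H)) : Set (H × H) :=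
  {p | ∃ g h, (p.1, g) ∈ S ∧ (p.1, h) ∈ T ∧ p.2 = g + h}

/-- The product (composition) S ∘ T of two linear relations: apply T first, then S. -/
def relComp (S T : Set (H × H)) : Set (H × H) :=
  {p | ∃ h, (p.1, h) ∈ T ∧ (h, p.2) ∈ S}

/-- The numerical range of a linear relation. -/
def numRange (S : Set (H × H)) : Set ℂ :=
  {z | ∃ p ∈ S, ‖p.1‖ = 1 ∧ z = ⟪p.2, p.1⟫}

/-!
(ii) ⇒ (iii) is the Banach–Steinhaus theorem on the Hilbert space `B = closure A ⊆ A**`. For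
`(f, g) ∈ A` with `‖f‖ ≤ 1` the functionals `q ↦ ⟪g, q.2⟫` on `B` are pointwise bounded: by (ii)
there is `y` with `(q.2, y) ∈ A*`, and then `|⟪g, q.2⟫| = |⟪y, f⟫| ≤ ‖y‖`. Evaluating a uniform
bound `M` on their norms at `q = (f, g)` gives `‖g‖² ≤ M max ‖f‖ ‖g‖`, so `‖g‖ ≤ max M 1`, and
homogeneity turns this into `‖g‖ ≤ max M 1 * ‖f‖`.

(iii) ⇒ (i): for `h ∈ H` the functional `f ↦ ⟪h, A f⟫` is bounded on `dom A`; a Hahn–Banach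
extension of it to `H` is represented by Riesz as `⟪k, ·⟫`, and then `(h, k) ∈ A*`.
-/

section

variable {E : Type*} [NormedAddCommGroup E] [InnerProductSpace ℂ E]

theorem subset_adjRel_adjRel (S : Set (E × E)) : S ⊆ adjRel (adjRel S) := by
  intro p hp q hq
  rw [← inner_conj_symm, ← hq p hp, inner_conj_symm]

theorem isClosed_adjRel (S : Set (E × E)) : IsClosed (adjRel S) := by
  have h : adjRel S = ⋂ q ∈ S, {p : E × E | ⟪p.2, q.1⟫ = ⟪p.1, q.2⟫} := by
    ext p; simp [adjRel]
  rw [h]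
  exact isClosed_biInter fun q _ => isClosed_eq (by fun_prop) (by fun_prop)

theorem closure_subset_adjRel_adjRel (S : Set (E × E)) : closure S ⊆ adjRel (adjRel S) :=
  closure_minimal (subset_adjRel_adjRel S) (isClosed_adjRel _)

theorem norm_inner_le_of_mem_adjRel {S : Set (E × E)} {p q : E × E} (hp : p ∈ S)
    (hq : q ∈ adjRel S) : ‖⟪p.2, q.1⟫‖ ≤ ‖q.2‖ * ‖p.1‖ := by
  rw [norm_inner_symm, ← hq p hp]
  exact norm_inner_le_norm _ _

theorem mulRel_eq_zero_of_bound (A : Submodule ℂ (E × E)) {C : ℝ}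
    (hC : ∀ p ∈ A, ‖p.2‖ ≤ C * ‖p.1‖) : mulRel (A : Set (E × E)) = {0} := by
  ext g
  refine ⟨fun hg => norm_le_zero_iff.mp ?_, fun hg => hg ▸ A.zero_mem⟩
  simpa using hC _ hg

end

theorem Submodule.norm_snd_le_of_unitBall {𝕜 E F : Type*} [RCLike 𝕜] [SeminormedAddCommGroup E]
    [NormedSpace 𝕜 E] [SeminormedAddCommGroup F] [NormedSpace 𝕜 F] (A : Submodule 𝕜 (E × F))
    {C : ℝ} (hC : ∀ p ∈ A, ‖p.1‖ ≤ 1 → ‖p.2‖ ≤ C) : ∀ p ∈ A, ‖p.2‖ ≤ C * ‖p.1‖ := by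
  intro p hp
  have hε : ∀ ε > 0, ‖p.2‖ ≤ C * (‖p.1‖ + ε) := by
    intro ε hε0
    have ht : 0 < ‖p.1‖ + ε := by positivity
    have hs := hC _ (A.smul_mem (((‖p.1‖ + ε)⁻¹ : ℝ) : 𝕜) hp)
    simp only [Prod.smul_fst, Prod.smul_snd, norm_smul, RCLike.norm_ofReal, abs_inv,
      abs_of_pos ht, inv_mul_le_iff₀ ht] at hs
    exact (hs (by linarith)).trans_eq (mul_comm _ _)
  have hlim : Filter.Tendsto (fun ε => C * (‖p.1‖ + ε)) (nhdsWithin 0 (Set.Ioi 0))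
      (nhds (C * (‖p.1‖ + 0))) :=
    ((continuous_const.mul (continuous_const.add continuous_id)).tendsto 0).mono_left
      nhdsWithin_le_nhds
  simpa using ge_of_tendsto hlim (eventually_nhdsWithin_of_forall hε)

section

variable {E : Type*} [NormedAddCommGroup E] [InnerProductSpace ℂ E] [CompleteSpace E]

theorem exists_bound_of_ranRel_subset (A : Submodule ℂ (E × E))
    (h : ranRel (adjRel (adjRel (A : Set (E × E)))) ⊆ domRel (adjRel (A : Set (E × E)))) :
    ∃ C, ∀ p ∈ A, ‖p.1‖ ≤ 1 → ‖p.2‖ ≤ C := by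
  let B := A.topologicalClosure
  let φ : {p : E × E // p ∈ A ∧ ‖p.1‖ ≤ 1} → B →L[ℂ] ℂ := fun p =>
    innerSL ℂ (p : E × E).2 ∘L ContinuousLinearMap.snd ℂ E E ∘L B.subtypeL
  have hφ : ∀ q : B, ∃ M, ∀ p, ‖φ p q‖ ≤ M := by
    intro q
    obtain ⟨y, hy⟩ := h ⟨(q : E × E).1, closure_subset_adjRel_adjRel _ q.2⟩
    refine ⟨‖y‖, fun p => ?_⟩
    calc ‖φ p q‖ ≤ ‖y‖ * ‖(p : E × E).1‖ := norm_inner_le_of_mem_adjRel (q := (_, y)) p.2.1 hy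
      _ ≤ ‖y‖ := mul_le_of_le_one_right (norm_nonneg y) p.2.2
  obtain ⟨M, hM⟩ := banach_steinhaus hφ
  refine ⟨max M 1, fun p hp hp1 => ?_⟩
  have hsq : ‖p.2‖ ^ 2 ≤ M * max ‖p.1‖ ‖p.2‖ :=
    calc ‖p.2‖ ^ 2 = ‖φ ⟨p, hp, hp1⟩ ⟨p, A.le_topologicalClosure hp⟩‖ := by
          simp [φ, inner_self_eq_norm_sq_to_K]
      _ ≤ ‖φ ⟨p, hp, hp1⟩‖ * ‖p‖ := (φ _).le_opNorm _
      _ ≤ M * max ‖p.1‖ ‖p.2‖ := by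
          rw [Prod.norm_def]; exact mul_le_mul_of_nonneg_right (hM _) (by positivity)
  rcases le_or_gt ‖p.2‖ 1 with h1 | h1
  · exact h1.trans (le_max_right _ _)
  · rw [max_eq_right (hp1.trans h1.le)] at hsq
    exact le_max_of_le_left (by nlinarith)

theorem domRel_adjRel_eq_univ_of_bound (A : Submodule ℂ (E × E)) {C : ℝ}
    (hC : ∀ p ∈ A, ‖p.2‖ ≤ C * ‖p.1‖) : domRel (adjRel (A : Set (E × E))) = Set.univ := by
  have hgraph : ∀ p ∈ A, p.1 = 0 → p.2 = 0 := fun p hp h0 =>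
    norm_le_zero_iff.mp (by simpa [h0] using hC p hp)
  let T := A.toLinearPMap
  have hT : ∀ x : T.domain, ‖T x‖ ≤ C * ‖x‖ := fun x =>
    hC _ (A.mem_graph_toLinearPMap hgraph x)
  refine Set.eq_univ_of_forall fun f => ?_
  let ℓ : StrongDual ℂ T.domain := ((innerSL ℂ f).toLinearMap ∘ₗ T.toFun).mkContinuous (‖f‖ * C)
    fun x => (norm_inner_le_norm f (T x)).trans (by rw [mul_assoc]; gcongr; exact hT x)
  obtain ⟨g, hg, -⟩ := exists_extension_norm_eq T.domain ℓ
  refine ⟨(InnerProductSpace.toDual ℂ E).symm g, fun q hq => ?_⟩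
  have hq1 : q.1 ∈ T.domain := ⟨q, hq, rfl⟩
  have hTq : T ⟨q.1, hq1⟩ = q.2 := sub_eq_zero.mp <|
    hgraph _ (A.sub_mem (A.mem_graph_toLinearPMap hgraph ⟨q.1, hq1⟩) hq) (sub_self q.1)
  calc ⟪(InnerProductSpace.toDual ℂ E).symm g, q.1⟫ = g q.1 := InnerProductSpace.toDual_symm_apply
    _ = ℓ ⟨q.1, hq1⟩ := hg ⟨q.1, hq1⟩
    _ = ⟪f, q.2⟫ := by rw [← hTq]; rfl

end

/-- dom A* = H iff ran A** ⊆ dom A* iff A is the graph of a bounded operator. -/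
theorem stmt11 (A : Submodule ℂ (H × H)) :
    (domRel (adjRel (A : Set (H × H))) = Set.univ ↔
      ranRel (adjRel (adjRel (A : Set (H × H)))) ⊆ domRel (adjRel (A : Set (H × H)))) ∧
    (domRel (adjRel (A : Set (H × H))) = Set.univ ↔
      (mulRel (A : Set (H × H)) = {0} ∧
        ∃ C : ℝ, ∀ p ∈ (A : Set (H × H)), ‖p.2‖ ≤ C * ‖p.1‖)) := by
  have h12 : domRel (adjRel (A : Set (H × H))) = Set.univ →
      ranRel (adjRel (adjRel (A : Set (H × H)))) ⊆ domRel (adjRel (A : Set (H × H))) := by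
    intro h1
    rw [h1]
    exact Set.subset_univ _
  have h23 : ranRel (adjRel (adjRel (A : Set (H × H)))) ⊆ domRel (adjRel (A : Set (H × H))) →
      ∃ C : ℝ, ∀ p ∈ A, ‖p.2‖ ≤ C * ‖p.1‖ := by
    intro h2
    obtain ⟨C, hC⟩ := exists_bound_of_ranRel_subset A h2
    exact ⟨C, A.norm_snd_le_of_unitBall hC⟩
  refine ⟨⟨h12, fun h2 => ?_⟩, ⟨fun h1 => ?_, fun ⟨_, C, hC⟩ => ?_⟩⟩
  · obtain ⟨C, hC⟩ := h23 h2
    exact domRel_adjRel_eq_univ_of_bound A hC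
  · obtain ⟨C, hC⟩ := h23 (h12 h1)
    exact ⟨mulRel_eq_zero_of_bound A hC, C, hC⟩
  · exact domRel_adjRel_eq_univ_of_bound A hC
end

section
/- Let A be a linear relation in a Hilbert space H and let A_∞ = A ∔ ({0} × mul A*). Then A_∞ is selfadjoint if and only if A is symmetric and dom A = closure(dom A) ∩ dom A*. -/
open scoped ComplexInnerProductSpace

variable {H : Type*} [NormedAddCommGroup H] [InnerProductSpace ℂ H] [CompleteSpace H]

/-!
Write `D = dom A`, so that `mul A* = D⊥`. A pair `(f, g)` is orthogonal (in the sense of the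
adjoint) to every `(0, v)` with `v ∈ D⊥` exactly when `f ∈ D⊥⊥ = closure D`; hence
`A_∞* = A* ∩ (closure D × H)`. If `A_∞` is selfadjoint, then `A ⊆ A_∞ = A_∞*` gives symmetry,
and every `f ∈ closure D ∩ dom A*` lies in `dom A_∞ = D`. Conversely, given `(f, g) ∈ A_∞*`,
the domain condition yields `(f, g') ∈ A`, and symmetry puts `(0, g - g')` into `A*`, so
`(f, g) = (f, g') + (0, g - g') ∈ A_∞`.
-/

section LinearRelation

omit [CompleteSpace H]

theorem adjRel_anti {S T : Set (H × H)} (h : S ⊆ T) : adjRel T ⊆ adjRel S :=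
  fun _ hp q hq => hp q (h hq)

theorem add_mem_adjRel {S : Set (H × H)} {p q : H × H} (hp : p ∈ adjRel S)
    (hq : q ∈ adjRel S) : p + q ∈ adjRel S := fun r hr => by
  simp only [Prod.fst_add, Prod.snd_add, inner_add_left, hp r hr, hq r hr]

theorem sub_mem_adjRel {S : Set (H × H)} {p q : H × H} (hp : p ∈ adjRel S)
    (hq : q ∈ adjRel S) : p - q ∈ adjRel S := fun r hr => by
  simp only [Prod.fst_sub, Prod.snd_sub, inner_sub_left, hp r hr, hq r hr]

theorem coe_map_fst_eq_domRel (A : Submodule ℂ (H × H)) :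
    (A.map (LinearMap.fst ℂ H H) : Set H) = domRel (A : Set (H × H)) := by
  ext f
  constructor
  · rintro ⟨⟨f, g⟩, hfg, rfl⟩
    exact ⟨g, hfg⟩
  · rintro ⟨g, hfg⟩
    exact ⟨(f, g), hfg, rfl⟩

theorem mulRel_adjRel_eq_orthogonal (A : Submodule ℂ (H × H)) :
    mulRel (adjRel (A : Set (H × H))) = ((A.map (LinearMap.fst ℂ H H))ᗮ : Set H) := by
  ext v
  constructor
  · rintro hv _ ⟨q, hq, rfl⟩
    have : ⟪v, q.1⟫ = 0 := by simpa using hv q hq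
    exact inner_eq_zero_symm.mp this
  · intro hv q hq
    have : ⟪q.1, v⟫ = 0 := hv q.1 ⟨q, hq, rfl⟩
    simpa using inner_eq_zero_symm.mp this

/-- The relation `A ∔ ({0} × mul A*)`. -/
def adjoinMulAdj (A : Submodule ℂ (H × H)) : Set (H × H) :=
  {p | ∃ u ∈ (A : Set (H × H)), ∃ v ∈ mulRel (adjRel (A : Set (H × H))), p = u + (0, v)}

theorem subset_adjoinMulAdj (A : Submodule ℂ (H × H)) : (A : Set (H × H)) ⊆ adjoinMulAdj A :=
  fun p hp => ⟨p, hp, 0, fun q _ => by simp, by simp⟩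

theorem zero_prod_mem_adjoinMulAdj {A : Submodule ℂ (H × H)} {v : H}
    (hv : v ∈ mulRel (adjRel (A : Set (H × H)))) : ((0 : H), v) ∈ adjoinMulAdj A :=
  ⟨0, A.zero_mem, v, hv, by simp⟩

theorem domRel_adjoinMulAdj (A : Submodule ℂ (H × H)) :
    domRel (adjoinMulAdj A) = domRel (A : Set (H × H)) := by
  ext f
  constructor
  · rintro ⟨g, u, hu, v, -, huv⟩
    obtain rfl : f = u.1 := by simpa using congrArg Prod.fst huv
    exact ⟨u.2, hu⟩
  · rintro ⟨g, hfg⟩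
    exact ⟨g, subset_adjoinMulAdj A hfg⟩

theorem adjoinMulAdj_subset_adjRel {A : Submodule ℂ (H × H)}
    (hsym : (A : Set (H × H)) ⊆ adjRel (A : Set (H × H))) :
    adjoinMulAdj A ⊆ adjRel (A : Set (H × H)) := by
  rintro _ ⟨u, hu, v, hv, rfl⟩
  exact add_mem_adjRel (hsym hu) hv

end LinearRelation

theorem closure_domRel_eq_orthogonal_orthogonal (A : Submodule ℂ (H × H)) :
    closure (domRel (A : Set (H × H))) = ((A.map (LinearMap.fst ℂ H H))ᗮᗮ : Set H) := by
  rw [Submodule.orthogonal_orthogonal_eq_closure, Submodule.topologicalClosure_coe,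
    coe_map_fst_eq_domRel]

theorem mem_adjRel_adjoinMulAdj_iff (A : Submodule ℂ (H × H)) (p : H × H) :
    p ∈ adjRel (adjoinMulAdj A) ↔
      p ∈ adjRel (A : Set (H × H)) ∧ p.1 ∈ closure (domRel (A : Set (H × H))) := by
  rw [closure_domRel_eq_orthogonal_orthogonal, SetLike.mem_coe, Submodule.mem_orthogonal]
  constructor
  · intro hp
    refine ⟨adjRel_anti (subset_adjoinMulAdj A) hp, fun v hv => ?_⟩
    rw [← SetLike.mem_coe, ← mulRel_adjRel_eq_orthogonal] at hv
    have := hp _ (zero_prod_mem_adjoinMulAdj hv)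
    rw [inner_zero_right] at this
    exact inner_eq_zero_symm.mp this.symm
  · rintro ⟨hpA, hp1⟩ _ ⟨u, hu, v, hv, rfl⟩
    rw [mulRel_adjRel_eq_orthogonal, SetLike.mem_coe] at hv
    have hp1v : ⟪p.1, v⟫ = 0 := inner_eq_zero_symm.mp (hp1 v hv)
    simp [hpA u hu, hp1v]

theorem adjRel_adjoinMulAdj_subset {A : Submodule ℂ (H × H)}
    (hsym : (A : Set (H × H)) ⊆ adjRel (A : Set (H × H)))
    (hdom : closure (domRel (A : Set (H × H))) ∩ domRel (adjRel (A : Set (H × H))) ⊆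
      domRel (A : Set (H × H))) :
    adjRel (adjoinMulAdj A) ⊆ adjoinMulAdj A := by
  intro p hp
  obtain ⟨hpA, hp1⟩ := (mem_adjRel_adjoinMulAdj_iff A p).mp hp
  obtain ⟨g, hg⟩ := hdom ⟨hp1, p.2, hpA⟩
  have hmul : ((0 : H), p.2 - g) ∈ adjRel (A : Set (H × H)) := by
    convert sub_mem_adjRel hpA (hsym hg) using 1
    simp [Prod.ext_iff]
  exact ⟨(p.1, g), hg, p.2 - g, hmul, by simp⟩

/-- A_∞ is selfadjoint iff A is symmetric and dom A = closure (dom A) ∩ dom A*. -/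
theorem stmt17 (A : Submodule ℂ (H × H)) (Ainf : Set (H × H))
    (hAinf : Ainf = {p | ∃ u ∈ (A : Set (H × H)),
        ∃ v ∈ mulRel (adjRel (A : Set (H × H))), p = u + (0, v)}) :
    adjRel Ainf = Ainf ↔
      ((A : Set (H × H)) ⊆ adjRel (A : Set (H × H)) ∧
       domRel (A : Set (H × H)) =
         closure (domRel (A : Set (H × H))) ∩ domRel (adjRel (A : Set (H × H)))) := by
  change Ainf = adjoinMulAdj A at hAinf
  subst hAinf
  constructor
  · intro hself
    have hsym : (A : Set (H × H)) ⊆ adjRel (A : Set (H × H)) := fun p hp =>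
      ((mem_adjRel_adjoinMulAdj_iff A p).mp (hself.symm ▸ subset_adjoinMulAdj A hp)).1
    refine ⟨hsym, subset_antisymm (fun f ⟨g, hfg⟩ => ⟨subset_closure ⟨g, hfg⟩, g, hsym hfg⟩) ?_⟩
    rintro f ⟨hf, g, hfg⟩
    have hfgInf : (f, g) ∈ adjoinMulAdj A := hself ▸ (mem_adjRel_adjoinMulAdj_iff A _).mpr ⟨hfg, hf⟩
    exact domRel_adjoinMulAdj A ▸ ⟨g, hfgInf⟩
  · rintro ⟨hsym, hdom⟩
    refine subset_antisymm (adjRel_adjoinMulAdj_subset hsym hdom.symm.subset) fun p hp => ?_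
    exact (mem_adjRel_adjoinMulAdj_iff A p).mpr
      ⟨adjoinMulAdj_subset_adjRel hsym hp,
        subset_closure (domRel_adjoinMulAdj A ▸ ⟨p.2, hp⟩)⟩
end
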